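/- arXiv:2503.13350 — 4 statements merged into one kernel-verified Lean document; each statement's English description precedes it below -/
import Mathlib

section
/- The quotient of the set P = {(A, B) ∈ SU(2) × SU(2) : A*B*A⁻¹*B⁻¹ = -1} by the simultaneous conjugation action of SU(2) has exactly one element; that is, P is nonempty and any two elements of P lie in the same conjugation orbit. (This is the paper's assertion that the genus-1 odd character variety M₁ consists of a single point.) -/
open Matrix Complex

/-- `SU2` is the special unitary group of 2×2 complex matrices of determinant 1. -/
abbrev SU2 := Matrix.specialUnitaryGroup (Fin 2) ℂ

/-- The group structure on the special unitary group, with inverse given by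
the conjugate transpose. -/
noncomputable instance instGroupSUC (n : ℕ) : Group (Matrix.specialUnitaryGroup (Fin n) ℂ) where
  inv A := ⟨star A.1, by
    obtain ⟨hu, hd⟩ := Matrix.mem_specialUnitaryGroup_iff.mp A.2
    refine Matrix.mem_specialUnitaryGroup_iff.mpr ⟨Unitary.star_mem hu, ?_⟩
    rw [Matrix.star_eq_conjTranspose, Matrix.det_conjTranspose, hd, star_one]⟩
  inv_mul_cancel A :=
    Subtype.ext (Unitary.star_mul_self_of_mem (Matrix.mem_specialUnitaryGroup_iff.mp A.2).1)

/-- The element `-1` of `SU(2)`. -/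
noncomputable def negOne : SU2 := ⟨-1, by
  refine Matrix.mem_specialUnitaryGroup_iff.mpr ⟨⟨?_, ?_⟩, ?_⟩ <;>
    simp [Matrix.det_neg]⟩

/-!
Anticommuting elements of SU(2) have trace zero, hence square to `-1`. If `X² = Y² = -1` and
`X + Y ≠ 0`, then `X + Y` is a positive real multiple of some `k ∈ SU(2)` (sums of elements of
SU(2) are quaternions), and `(X + Y) Y = X Y - 1 = X (X + Y)` shows that `X k` conjugates `Y`
to `X` while commuting with every `Z` that anticommutes with both `X` and `Y`; if `X + Y = 0`,
any such `Z` does the job. Applying this first to move `A` to `diag(i, -i)`, and then to move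
`B` to `!![0, -1; 1, 0]` while fixing `diag(i, -i)`, conjugates every solution to one pair.
-/

open ComplexConjugate

theorem Matrix.trace_eq_zero_of_mul_eq_neg_mul {n R : Type*} [Fintype n] [DecidableEq n]
    [CommRing R] [IsAddTorsionFree R] {A B : Matrix n n R} (hB : IsUnit B)
    (h : A * B = -(B * A)) : A.trace = 0 := by
  have hconj : B * A * B⁻¹ = -A := by
    rw [← neg_eq_iff_eq_neg.mpr h, neg_mul, mul_assoc,
      mul_nonsing_inv _ ((isUnit_iff_isUnit_det B).mp hB), mul_one]
  have htr := trace_conj hB A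
  rw [hconj, trace_neg] at htr
  exact neg_eq_self.mp htr

theorem Matrix.mul_self_eq_neg_det_smul_one_of_trace_eq_zero {R : Type*} [CommRing R]
    [Nontrivial R] {M : Matrix (Fin 2) (Fin 2) R} (h : M.trace = 0) : M * M = -(M.det • 1) := by
  have hM := aeval_self_charpoly M
  rw [charpoly_fin_two, h, map_zero, zero_mul, sub_zero, map_add, map_pow, Polynomial.aeval_X,
    Polynomial.aeval_C, Algebra.algebraMap_eq_smul_one] at hM
  rw [← sq]
  exact eq_neg_of_add_eq_zero_left hM

/-- The quaternion `s + t j`, as a matrix under the embedding `ℍ ↪ M₂(ℂ)`. -/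
def quaternionMatrix (s t : ℂ) : Matrix (Fin 2) (Fin 2) ℂ :=
  !![s, t; -conj t, conj s]

theorem quaternionMatrix_zero : quaternionMatrix 0 0 = 0 := by
  rw [quaternionMatrix, map_zero, neg_zero]
  exact (eta_fin_two 0).symm

theorem quaternionMatrix_add (s t s' t' : ℂ) :
    quaternionMatrix s t + quaternionMatrix s' t' = quaternionMatrix (s + s') (t + t') := by
  ext i j
  fin_cases i <;> fin_cases j <;> simp [quaternionMatrix, add_comm]

theorem star_mul_self_quaternionMatrix (s t : ℂ) :
    star (quaternionMatrix s t) * quaternionMatrix s t = (conj s * s + conj t * t) • 1 := by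
  ext i j
  fin_cases i <;> fin_cases j <;>
    simp [quaternionMatrix, mul_apply, Fin.sum_univ_two, mul_comm, add_comm]

theorem det_quaternionMatrix (s t : ℂ) :
    (quaternionMatrix s t).det = conj s * s + conj t * t := by
  rw [quaternionMatrix, det_fin_two_of]
  ring

theorem quaternionMatrix_mem {s t : ℂ} (h : conj s * s + conj t * t = 1) :
    quaternionMatrix s t ∈ specialUnitaryGroup (Fin 2) ℂ :=
  mem_specialUnitaryGroup_iff.mpr
    ⟨mem_unitaryGroup_iff'.mpr (by rw [star_mul_self_quaternionMatrix, h, one_smul]),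
      by rw [det_quaternionMatrix, h]⟩

namespace SU2

@[simp] theorem coe_mul (A B : SU2) : (A * B).1 = A.1 * B.1 := rfl

@[simp] theorem coe_negOne : negOne.1 = -1 := rfl

theorem star_mul_self (A : SU2) : star A.1 * A.1 = 1 :=
  mem_unitaryGroup_iff'.mp A.2.1

theorem mul_star_self (A : SU2) : A.1 * star A.1 = 1 :=
  mem_unitaryGroup_iff.mp A.2.1

theorem det_eq_one (A : SU2) : A.1.det = 1 := A.2.2

theorem coe_eq_quaternionMatrix (A : SU2) : A.1 = quaternionMatrix (A.1 0 0) (A.1 0 1) := by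
  have hstar : star A.1 = A.1.adjugate := by
    rw [← one_mul A.1.adjugate, ← star_mul_self, mul_assoc, mul_adjugate, det_eq_one, one_smul,
      mul_one]
  have h10 : A.1 1 0 = -conj (A.1 0 1) := by
    simpa [adjugate_fin_two] using congrArg conj (congrFun₂ hstar 0 1)
  have h11 : A.1 1 1 = conj (A.1 0 0) := by
    simpa [adjugate_fin_two] using congrArg conj (congrFun₂ hstar 1 1)
  ext i j
  fin_cases i <;> fin_cases j <;> simp [quaternionMatrix, h10, h11]

theorem conj_eq_iff {g A B : SU2} : g * A * g⁻¹ = B ↔ g.1 * A.1 = B.1 * g.1 := by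
  rw [mul_inv_eq_iff_eq_mul, Subtype.ext_iff, coe_mul, coe_mul]

theorem conj_negOne (g : SU2) : g * negOne * g⁻¹ = negOne :=
  conj_eq_iff.mpr (by rw [coe_negOne, mul_neg_one, neg_one_mul])

theorem commutator_eq_negOne_iff {A B : SU2} :
    A * B * A⁻¹ * B⁻¹ = negOne ↔ A.1 * B.1 = -(B.1 * A.1) := by
  rw [mul_inv_eq_iff_eq_mul, conj_eq_iff, coe_mul, coe_negOne, neg_one_mul, neg_mul]

theorem mul_self_eq_neg_one_of_anticomm {A B : SU2} (h : A.1 * B.1 = -(B.1 * A.1)) :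
    A.1 * A.1 = -1 := by
  have htr := trace_eq_zero_of_mul_eq_neg_mul (IsUnit.of_mul_eq_one _ (mul_star_self B)) h
  rw [mul_self_eq_neg_det_smul_one_of_trace_eq_zero htr, det_eq_one, one_smul]

theorem quaternionMatrix_eq_pos_smul {s t : ℂ} (h : quaternionMatrix s t ≠ 0) :
    ∃ r : ℝ, 0 < r ∧ ∃ k : SU2, quaternionMatrix s t = (r : ℂ) • k.1 := by
  obtain ⟨n, hn, hn_eq⟩ : ∃ n : ℝ, 0 < n ∧ (n : ℂ) = conj s * s + conj t * t := by
    refine ⟨normSq s + normSq t, ?_, by push_cast [normSq_eq_conj_mul_self]; rfl⟩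
    obtain hs | ht : s ≠ 0 ∨ t ≠ 0 := by
      contrapose! h
      rw [h.1, h.2, quaternionMatrix_zero]
    · exact add_pos_of_pos_of_nonneg (normSq_pos.mpr hs) (normSq_nonneg t)
    · exact add_pos_of_nonneg_of_pos (normSq_nonneg s) (normSq_pos.mpr ht)
  set r := √n
  have hr : 0 < r := Real.sqrt_pos.mpr hn
  have hr0 : (r : ℂ) ≠ 0 := ofReal_ne_zero.mpr hr.ne'
  have hstar_r : star (r : ℂ)⁻¹ = (r : ℂ)⁻¹ := by rw [star_inv₀, Complex.star_def, conj_ofReal]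
  have hn_inv : (r : ℂ)⁻¹ ^ 2 * n = 1 := by
    rw [← ofReal_inv, ← ofReal_pow, ← ofReal_mul, inv_pow, Real.sq_sqrt hn.le,
      inv_mul_cancel₀ hn.ne', ofReal_one]
  refine ⟨r, hr, ⟨(r : ℂ)⁻¹ • quaternionMatrix s t,
    mem_specialUnitaryGroup_iff.mpr ⟨?_, ?_⟩⟩, ?_⟩
  · rw [mem_unitaryGroup_iff', star_smul, smul_mul_smul, star_mul_self_quaternionMatrix, ← hn_eq,
      smul_smul, hstar_r, ← sq, hn_inv, one_smul]
  · rw [det_smul, Fintype.card_fin, det_quaternionMatrix, ← hn_eq, hn_inv]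
  · rw [smul_smul, mul_inv_cancel₀ hr0, one_smul]

theorem add_eq_pos_smul {X Y : SU2} (h : X.1 + Y.1 ≠ 0) :
    ∃ r : ℝ, 0 < r ∧ ∃ k : SU2, X.1 + Y.1 = (r : ℂ) • k.1 := by
  rw [coe_eq_quaternionMatrix X, coe_eq_quaternionMatrix Y, quaternionMatrix_add] at h ⊢
  exact quaternionMatrix_eq_pos_smul h

theorem exists_conj_eq_of_add_ne_zero {X Y : SU2} (hX : X.1 * X.1 = -1) (hY : Y.1 * Y.1 = -1)
    (hXY : X.1 + Y.1 ≠ 0) :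
    ∃ g : SU2, g * Y * g⁻¹ = X ∧
      ∀ Z : SU2, X.1 * Z.1 = -(Z.1 * X.1) → Y.1 * Z.1 = -(Z.1 * Y.1) → g * Z * g⁻¹ = Z := by
  obtain ⟨r, hr, k, hk⟩ := add_eq_pos_smul hXY
  have hr0 : (r : ℂ) ≠ 0 := ofReal_ne_zero.mpr hr.ne'
  have hkY : k.1 * Y.1 = X.1 * k.1 := by
    apply smul_right_injective _ hr0
    calc (r : ℂ) • (k.1 * Y.1) = (X.1 + Y.1) * Y.1 := by rw [hk, smul_mul_assoc]
      _ = X.1 * (X.1 + Y.1) := by rw [add_mul, mul_add, hX, hY, add_comm]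
      _ = (r : ℂ) • (X.1 * k.1) := by rw [hk, mul_smul_comm]
  refine ⟨X * k, conj_eq_iff.mpr ?_, fun Z hXZ hYZ => conj_eq_iff.mpr ?_⟩
  · rw [coe_mul, mul_assoc, hkY]
  · have hkZ : k.1 * Z.1 = -(Z.1 * k.1) := by
      apply smul_right_injective _ hr0
      calc (r : ℂ) • (k.1 * Z.1) = (X.1 + Y.1) * Z.1 := by rw [hk, smul_mul_assoc]
        _ = -(Z.1 * (X.1 + Y.1)) := by rw [add_mul, mul_add, hXZ, hYZ, neg_add]
        _ = (r : ℂ) • -(Z.1 * k.1) := by rw [hk, mul_smul_comm, smul_neg]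
    rw [coe_mul, mul_assoc, hkZ, mul_neg, ← mul_assoc, hXZ, neg_mul, neg_neg, mul_assoc]

theorem conj_eq_of_add_eq_zero {X Y W : SU2} (h : X.1 + Y.1 = 0)
    (hW : X.1 * W.1 = -(W.1 * X.1)) : W * Y * W⁻¹ = X := by
  rw [conj_eq_iff, eq_neg_of_add_eq_zero_right h, mul_neg, hW]

theorem exists_conj_eq_of_anticomm {X Y Z : SU2} (hX : X.1 * X.1 = -1) (hY : Y.1 * Y.1 = -1)
    (hXZ : X.1 * Z.1 = -(Z.1 * X.1)) (hYZ : Y.1 * Z.1 = -(Z.1 * Y.1)) :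
    ∃ g : SU2, g * Y * g⁻¹ = X ∧ g * Z * g⁻¹ = Z := by
  by_cases hXY : X.1 + Y.1 = 0
  · exact ⟨Z, conj_eq_of_add_eq_zero hXY hXZ, mul_inv_cancel_right Z Z⟩
  · obtain ⟨g, hg, hfix⟩ := exists_conj_eq_of_add_ne_zero hX hY hXY
    exact ⟨g, hg, hfix Z hXZ hYZ⟩

noncomputable def quatI : SU2 := ⟨quaternionMatrix I 0, quaternionMatrix_mem (by simp)⟩

noncomputable def quatJ : SU2 := ⟨quaternionMatrix 0 (-1), quaternionMatrix_mem (by simp)⟩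

theorem quatI_mul_quatJ : quatI.1 * quatJ.1 = -(quatJ.1 * quatI.1) := by
  simp [quatI, quatJ, quaternionMatrix]

theorem exists_conj_eq_quatI_quatJ {A B : SU2} (h : A * B * A⁻¹ * B⁻¹ = negOne) :
    ∃ g : SU2, g * A * g⁻¹ = quatI ∧ g * B * g⁻¹ = quatJ := by
  have hJI : quatJ.1 * quatI.1 = -(quatI.1 * quatJ.1) :=
    neg_eq_iff_eq_neg.mp quatI_mul_quatJ.symm
  obtain ⟨g, hg⟩ : ∃ g : SU2, g * A * g⁻¹ = quatI := by
    have hA := mul_self_eq_neg_one_of_anticomm (commutator_eq_negOne_iff.mp h)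
    by_cases hIA : quatI.1 + A.1 = 0
    · exact ⟨quatJ, conj_eq_of_add_eq_zero hIA quatI_mul_quatJ⟩
    · obtain ⟨g, hg, -⟩ :=
        exists_conj_eq_of_add_ne_zero (mul_self_eq_neg_one_of_anticomm quatI_mul_quatJ) hA hIA
      exact ⟨g, hg⟩
  have hB'I : (g * B * g⁻¹).1 * quatI.1 = -(quatI.1 * (g * B * g⁻¹).1) := by
    refine neg_eq_iff_eq_neg.mp (commutator_eq_negOne_iff.mp ?_).symm
    rw [← hg, ← conj_negOne g, ← h]
    group
  obtain ⟨g', hg'B, hg'I⟩ := exists_conj_eq_of_anticomm (mul_self_eq_neg_one_of_anticomm hJI)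
    (mul_self_eq_neg_one_of_anticomm hB'I) hJI hB'I
  exact ⟨g' * g, by rw [← hg'I, ← hg]; group, by rw [← hg'B]; group⟩

end SU2

/-- The genus-1 odd character variety
`M₁ = {(A,B) ∈ SU(2)² : ABA⁻¹B⁻¹ = -1} / conjugation` consists of a single point:
the set of such pairs is nonempty, and any two such pairs are simultaneously conjugate. -/
theorem genus_one_odd_character_variety_single_point :
    (∃ A B : SU2, A * B * A⁻¹ * B⁻¹ = negOne) ∧
    (∀ A B A' B' : SU2, A * B * A⁻¹ * B⁻¹ = negOne → A' * B' * A'⁻¹ * B'⁻¹ = negOne →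
      ∃ g : SU2, g * A * g⁻¹ = A' ∧ g * B * g⁻¹ = B') := by
  refine ⟨⟨SU2.quatI, SU2.quatJ, SU2.commutator_eq_negOne_iff.mpr SU2.quatI_mul_quatJ⟩,
    fun A B A' B' h h' => ?_⟩
  obtain ⟨g, hgA, hgB⟩ := SU2.exists_conj_eq_quatI_quatJ h
  obtain ⟨g', hg'A, hg'B⟩ := SU2.exists_conj_eq_quatI_quatJ h'
  refine ⟨g'⁻¹ * g, ?_, ?_⟩
  · rw [show A' = g'⁻¹ * (g' * A' * g'⁻¹) * g' by group, hg'A, ← hgA]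
    group
  · rw [show B' = g'⁻¹ * (g' * B' * g'⁻¹) * g' by group, hg'B, ← hgB]
    group
end

section
/- If A, B ∈ SU(2) satisfy A*B*A⁻¹*B⁻¹ = -1, then there exists g ∈ SU(2) such that g*A*g⁻¹ = A₀ and g*B*g⁻¹ = B₀; i.e., every pair with commutator -1 is simultaneously conjugate to the standard pair (A₀, B₀). -/
open Matrix Complex

/-- The element `A₀ = diag(i, -i)` of `SU(2)`. -/
noncomputable def A₀ : SU2 := ⟨!![I, 0; 0, -I], by
  refine Matrix.mem_specialUnitaryGroup_iff.mpr ⟨⟨?_, ?_⟩, ?_⟩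
  · ext i j
    fin_cases i <;> fin_cases j <;>
      simp [Matrix.mul_apply, Fin.sum_univ_succ, Matrix.conjTranspose_apply]
  · ext i j
    fin_cases i <;> fin_cases j <;>
      simp [Matrix.mul_apply, Fin.sum_univ_succ, Matrix.conjTranspose_apply]
  · simp [Matrix.det_fin_two_of]⟩

/-- The element `B₀ = [[0,1],[-1,0]]` of `SU(2)`. -/
noncomputable def B₀ : SU2 := ⟨!![0, 1; -1, 0], by
  refine Matrix.mem_specialUnitaryGroup_iff.mpr ⟨⟨?_, ?_⟩, ?_⟩
  · ext i j
    fin_cases i <;> fin_cases j <;>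
      simp [Matrix.mul_apply, Fin.sum_univ_succ, Matrix.conjTranspose_apply]
  · ext i j
    fin_cases i <;> fin_cases j <;>
      simp [Matrix.mul_apply, Fin.sum_univ_succ, Matrix.conjTranspose_apply]
  · simp [Matrix.det_fin_two_of]⟩

/-! Since `-1` is central, the hypothesis says that `A` and `B` anticommute. Conjugating `A` by `B`
gives `tr A = -tr A`, and an element of `SU(2)` with trace `0` squares to `-1`; likewise for `B`.
If `u² = v² = -1` then `(1 - v u) u = u + v = v (1 - v u)`, and some real multiple of `1 - v u`
lies in `SU(2)` unless `v u = 1`; in that case `v = -u`, and any element anticommuting with `u`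
conjugates `u` to `v`. This conjugates `A` to `A₀`, turning `B` into some
`B'` anticommuting with `A₀`. A second step conjugates `B'` to `B₀` by a multiple of `1 - B₀ B'`,
or by `A₀` itself, and either one commutes with `A₀`, which anticommutes with both `B₀` and `B'`.
-/

open ComplexConjugate

namespace Matrix

theorem of_mem_specialUnitaryGroup_fin_two_iff {a b c d : ℂ} :
    !![a, b; c, d] ∈ specialUnitaryGroup (Fin 2) ℂ ↔
      d = conj a ∧ c = -conj b ∧ Complex.normSq a + Complex.normSq b = 1 := by
  rw [mem_specialUnitaryGroup_iff, mem_unitaryGroup_iff', det_fin_two_of]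
  constructor
  · rintro ⟨hu, hdet⟩
    have hstar : star !![a, b; c, d] = adjugate !![a, b; c, d] := by
      rw [← inv_eq_left_inv hu, inv_def, det_fin_two_of, hdet, Ring.inverse_one, one_smul]
    rw [adjugate_fin_two_of, ← Matrix.ext_iff] at hstar
    simp only [Fin.forall_fin_two, star_apply, of_apply, cons_val', cons_val_zero, cons_val_one,
      empty_val', cons_val_fin_one] at hstar
    obtain ⟨-, hstar_b, hstar_d⟩ := hstar
    have hd : d = conj a := by rw [← hstar_d, Complex.star_def, Complex.conj_conj]
    have hc : c = -conj b := by rw [← neg_neg c, ← hstar_b, Complex.star_def]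
    subst hd hc
    refine ⟨rfl, rfl, Complex.ofReal_injective ?_⟩
    push_cast
    rw [← Complex.mul_conj, ← Complex.mul_conj]
    linear_combination hdet
  · rintro ⟨rfl, rfl, h⟩
    have h' : a * conj a + b * conj b = 1 := by
      rw [Complex.mul_conj, Complex.mul_conj]
      exact_mod_cast h
    simp only [← Matrix.ext_iff, Fin.forall_fin_two, mul_apply, Fin.sum_univ_two, star_apply,
      of_apply, cons_val', cons_val_zero, cons_val_one, empty_val', cons_val_fin_one,
      one_apply_eq, one_apply_ne, ne_eq, zero_ne_one, one_ne_zero, not_false_eq_true,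
      Complex.star_def, map_neg, Complex.conj_conj]
    refine ⟨⟨⟨?_, ?_⟩, ?_, ?_⟩, ?_⟩ <;> first | linear_combination h' | ring

theorem exists_eq_of_mem_specialUnitaryGroup_fin_two {M : Matrix (Fin 2) (Fin 2) ℂ}
    (hM : M ∈ specialUnitaryGroup (Fin 2) ℂ) :
    ∃ a b : ℂ, Complex.normSq a + Complex.normSq b = 1 ∧ M = !![a, b; -conj b, conj a] := by
  rw [eta_fin_two M, of_mem_specialUnitaryGroup_fin_two_iff] at hM
  obtain ⟨h11, h10, h⟩ := hM
  refine ⟨M 0 0, M 0 1, h, ?_⟩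
  conv_lhs => rw [eta_fin_two M, h11, h10]

theorem exists_ofReal_smul_mem_specialUnitaryGroup_fin_two {x y : ℂ} (h : x ≠ 0 ∨ y ≠ 0) :
    ∃ r : ℝ, (r : ℂ) • !![x, y; -conj y, conj x] ∈ specialUnitaryGroup (Fin 2) ℂ := by
  have hn : 0 < Complex.normSq x + Complex.normSq y := by
    rcases h with h | h
    · exact add_pos_of_pos_of_nonneg (Complex.normSq_pos.2 h) (Complex.normSq_nonneg y)
    · exact add_pos_of_nonneg_of_pos (Complex.normSq_nonneg x) (Complex.normSq_pos.2 h)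
  refine ⟨(√(Complex.normSq x + Complex.normSq y))⁻¹, ?_⟩
  simp only [smul_of, smul_cons, smul_eq_mul, smul_empty, of_mem_specialUnitaryGroup_fin_two_iff,
    map_mul, Complex.conj_ofReal, mul_neg, true_and, Complex.normSq_ofReal, ← mul_add]
  rw [← sq, inv_pow, Real.sq_sqrt hn.le, inv_mul_cancel₀ hn.ne']

end Matrix

namespace SU2

theorem negOne_mul_negOne : negOne * negOne = 1 :=
  Subtype.ext (show (-1 : Matrix (Fin 2) (Fin 2) ℂ) * -1 = 1 by simp)

theorem commute_negOne (g : SU2) : Commute negOne g :=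
  Subtype.ext (show (-1 : Matrix (Fin 2) (Fin 2) ℂ) * g.1 = g.1 * -1 by simp)

theorem val_negOne_mul (g : SU2) : (negOne * g).1 = -g.1 :=
  neg_one_mul g.1

theorem trace_conj (g u : SU2) : trace (g * u * g⁻¹).1 = trace u.1 := by
  show trace (g.1 * u.1 * (g⁻¹).1) = trace u.1
  rw [trace_mul_cycle, ← Submonoid.coe_mul, ← Submonoid.coe_mul, inv_mul_cancel, one_mul]

theorem val_add_val_inv (u : SU2) : u.1 + (u⁻¹).1 = trace u.1 • 1 := by
  obtain ⟨a, b, -, hu⟩ := exists_eq_of_mem_specialUnitaryGroup_fin_two u.2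
  show u.1 + star u.1 = _
  rw [hu]
  ext i j
  fin_cases i <;> fin_cases j <;> simp [trace_fin_two_of, add_comm]

theorem exists_val_eq_smul_one_sub {W : SU2} (hW : W ≠ 1) :
    ∃ (g : SU2) (c : ℂ), g.1 = c • (1 - W.1) := by
  obtain ⟨a, b, -, hab⟩ := exists_eq_of_mem_specialUnitaryGroup_fin_two W.2
  have hne : 1 - a ≠ 0 ∨ -b ≠ 0 := by
    by_contra! h
    obtain ⟨ha, hb⟩ := h
    apply hW
    apply Subtype.ext
    rw [hab, OneMemClass.coe_one, one_fin_two, ← sub_eq_zero.mp ha, neg_eq_zero.mp hb]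
    simp
  obtain ⟨r, hr⟩ := exists_ofReal_smul_mem_specialUnitaryGroup_fin_two hne
  refine ⟨⟨_, hr⟩, r, ?_⟩
  rw [hab, one_fin_two]
  ext i j
  fin_cases i <;> fin_cases j <;> simp

def Anticommute (u w : SU2) : Prop := u * w = negOne * (w * u)

variable {u v w z : SU2}

theorem Anticommute.symm (h : Anticommute u w) : Anticommute w u := by
  rw [Anticommute, h, ← mul_assoc, negOne_mul_negOne, one_mul]

theorem Anticommute.conj (g : SU2) (h : Anticommute u w) :
    Anticommute (g * u * g⁻¹) (g * w * g⁻¹) := by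
  calc g * u * g⁻¹ * (g * w * g⁻¹) = g * (u * w) * g⁻¹ := by group
    _ = g * negOne * (w * u) * g⁻¹ := by rw [h, ← mul_assoc g]
    _ = negOne * (g * w * g⁻¹ * (g * u * g⁻¹)) := by rw [← (commute_negOne g).eq]; group

theorem Anticommute.commute_mul (hu : Anticommute z u) (hv : Anticommute z v) :
    Commute z (v * u) :=
  calc z * (v * u) = negOne * (v * (z * u)) := by rw [← mul_assoc, hv, mul_assoc, mul_assoc]
    _ = negOne * negOne * (v * u * z) := by rw [hu, ← mul_assoc v, ← (commute_negOne v).eq]; group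
    _ = v * u * z := by rw [negOne_mul_negOne, one_mul]

theorem Anticommute.mul_self_eq_negOne (h : Anticommute u w) : u * u = negOne := by
  have htrace : trace u.1 = 0 := by
    have hconj : w * u * w⁻¹ = negOne * u := by
      rw [mul_inv_eq_iff_eq_mul, h.symm, mul_assoc]
    have := trace_conj w u
    rw [hconj, val_negOne_mul, trace_neg] at this
    exact CharZero.neg_eq_self_iff.mp this
  have hinv : u⁻¹ = negOne * u := by
    apply Subtype.ext
    rw [val_negOne_mul, eq_neg_iff_add_eq_zero, add_comm, val_add_val_inv, htrace, zero_smul]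
  have : negOne * (u * u) = 1 := by rw [← mul_assoc, ← hinv, inv_mul_cancel]
  rw [eq_inv_of_mul_eq_one_right this, inv_eq_of_mul_eq_one_right negOne_mul_negOne]

theorem exists_mul_eq_mul_of_anticommute (hu : u * u = negOne) (hv : v * v = negOne)
    (hwu : Anticommute w u) : ∃ g : SU2, g * u = v * g ∧ (Anticommute w v → Commute w g) := by
  by_cases hvu : v * u = 1
  · refine ⟨w, ?_, fun _ => Commute.refl w⟩
    have hv_eq : v = negOne * u := by
      rw [eq_inv_of_mul_eq_one_left hvu, inv_eq_of_mul_eq_one_right]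
      rw [← mul_assoc, ← (commute_negOne u).eq, mul_assoc, hu, negOne_mul_negOne]
    rw [hwu, hv_eq, mul_assoc]
  obtain ⟨g, c, hg⟩ := exists_val_eq_smul_one_sub hvu
  refine ⟨g, Subtype.ext ?_, fun hwv => Subtype.ext ?_⟩
  · have hu' : u.1 * u.1 = -1 := congrArg Subtype.val hu
    have hv' : v.1 * v.1 = -1 := congrArg Subtype.val hv
    show g.1 * u.1 = v.1 * g.1
    rw [hg, smul_mul_assoc, mul_smul_comm, sub_mul, mul_sub, Submonoid.coe_mul, mul_assoc,
      ← mul_assoc v.1 v.1, hu', hv']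
    simp [add_comm]
  · have hcomm : Commute w.1 (v * u).1 := congrArg Subtype.val (hwu.commute_mul hwv)
    show Commute w.1 g.1
    rw [hg]
    exact ((Commute.one_right _).sub_right hcomm).smul_right c

theorem anticommute_of_commutator_eq_negOne {A B : SU2} (h : A * B * A⁻¹ * B⁻¹ = negOne) :
    Anticommute A B := by
  rw [mul_inv_eq_iff_eq_mul, mul_inv_eq_iff_eq_mul] at h
  rw [Anticommute, h, mul_assoc, (commute_negOne _).eq]

theorem anticommute_A₀_B₀ : Anticommute A₀ B₀ := by
  apply Subtype.ext
  simp [A₀, B₀, negOne]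

end SU2

/-- Every pair `(A, B)` in `SU(2)` with commutator `ABA⁻¹B⁻¹ = -1` is simultaneously
conjugate to the standard pair `(A₀, B₀)`. -/
theorem pair_with_commutator_negOne_conjugate_to_standard_pair
    (A B : SU2) (h : A * B * A⁻¹ * B⁻¹ = negOne) :
    ∃ g : SU2, g * A * g⁻¹ = A₀ ∧ g * B * g⁻¹ = B₀ := by
  have hAB := SU2.anticommute_of_commutator_eq_negOne h
  have hA₀B₀ := SU2.anticommute_A₀_B₀
  obtain ⟨g₁, hg₁, -⟩ := SU2.exists_mul_eq_mul_of_anticommute hAB.mul_self_eq_negOne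
    hA₀B₀.mul_self_eq_negOne hAB.symm
  have hA₀B' : SU2.Anticommute A₀ (g₁ * B * g₁⁻¹) := mul_inv_eq_of_eq_mul hg₁ ▸ hAB.conj g₁
  obtain ⟨g₂, hg₂, hcomm⟩ := SU2.exists_mul_eq_mul_of_anticommute
    hA₀B'.symm.mul_self_eq_negOne hA₀B₀.symm.mul_self_eq_negOne hA₀B'
  refine ⟨g₂ * g₁, ?_, ?_⟩
  · rw [mul_inv_eq_iff_eq_mul, mul_assoc, hg₁, ← mul_assoc, ← (hcomm hA₀B₀).eq, mul_assoc]
  · rw [show g₂ * g₁ * B * (g₂ * g₁)⁻¹ = g₂ * (g₁ * B * g₁⁻¹) * g₂⁻¹ by group]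
    exact mul_inv_eq_of_eq_mul hg₂
end

section
/- Let g ≥ 1 and let (A₁,...,A_g, B₁,...,B_g) ∈ SU(2)^{2g} satisfy ∏_{i=1}^{g} A_i*B_i*A_i⁻¹*B_i⁻¹ = -1. If an element h ∈ SU(2) commutes with every A_i and with every B_i, then h = 1 or h = -1. (Every point of the representation variety R_g is an irreducible representation, so the stabilizer of the simultaneous conjugation action at every point of R_g is exactly the center {±1}; this underlies the smoothness of the odd character variety M_g.) -/
/-!
If `h ≠ ±1`, then `h` is not a scalar matrix, since the only scalars of determinant one are `±1`.
The centralizer of a non-scalar `2 × 2` matrix `M` is the commutative algebra spanned by `1` and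
`M`, so every `Aᵢ` commutes with `Bᵢ`. Then all commutators are trivial and their product is `1`,
not `-1`.
-/

open Matrix Complex

namespace Matrix

variable {K : Type*} [Field K] {M X Y : Matrix (Fin 2) (Fin 2) K}

theorem fin_two_offDiag_ne_zero_or_diag_ne_of_ne_scalar (hM : ∀ c : K, M ≠ scalar (Fin 2) c) :
    M 0 1 ≠ 0 ∨ M 1 0 ≠ 0 ∨ M 0 0 ≠ M 1 1 := by
  by_contra! h
  obtain ⟨h01, h10, hdiag⟩ := h
  exact hM (M 0 0) (by ext i j; fin_cases i <;> fin_cases j <;> simp [h01, h10, hdiag])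

theorem exists_eq_smul_one_add_smul_of_commute (hM : ∀ c : K, M ≠ scalar (Fin 2) c)
    (hX : Commute M X) : ∃ a b : K, X = a • 1 + b • M := by
  have e : ∀ i j, (M * X) i j = (X * M) i j := fun i j => by rw [hX.eq]
  simp only [mul_apply, Fin.sum_univ_two] at e
  have e00 := e 0 0; have e01 := e 0 1; have e10 := e 1 0
  -- These say `(X 0 1, X 1 0, X 1 1 - X 0 0)` is proportional to `(M 0 1, M 1 0, M 1 1 - M 0 0)`;
  -- the factor `b` is read off a nonzero entry of the latter.
  rcases fin_two_offDiag_ne_zero_or_diag_ne_of_ne_scalar hM with h | h | h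
  · refine ⟨X 0 0 - X 0 1 / M 0 1 * M 0 0, X 0 1 / M 0 1, ?_⟩
    ext i j; fin_cases i <;> fin_cases j <;> simp <;> field_simp
    · linear_combination e00
    · linear_combination e01
  · refine ⟨X 0 0 - X 1 0 / M 1 0 * M 0 0, X 1 0 / M 1 0, ?_⟩
    ext i j; fin_cases i <;> fin_cases j <;> simp <;> field_simp
    · linear_combination -e00
    · linear_combination -e10
  · have hdiag : M 1 1 - M 0 0 ≠ 0 := sub_ne_zero.mpr h.symm
    refine ⟨X 0 0 - (X 1 1 - X 0 0) / (M 1 1 - M 0 0) * M 0 0, (X 1 1 - X 0 0) / (M 1 1 - M 0 0), ?_⟩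
    ext i j; fin_cases i <;> fin_cases j <;> simp <;> field_simp
    · linear_combination -e01
    · linear_combination e10
    · ring

theorem commute_of_commute_of_ne_scalar (hM : ∀ c : K, M ≠ scalar (Fin 2) c)
    (hX : Commute M X) (hY : Commute M Y) : Commute X Y := by
  obtain ⟨a, b, rfl⟩ := exists_eq_smul_one_add_smul_of_commute hM hX
  obtain ⟨c, d, rfl⟩ := exists_eq_smul_one_add_smul_of_commute hM hY
  have hcomm : Commute M (c • 1 + d • M) :=
    ((Commute.one_right M).smul_right c).add_right ((Commute.refl M).smul_right d)
  exact ((Commute.one_left _).smul_left a).add_left (hcomm.smul_left b)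

end Matrix

theorem eq_one_or_eq_negOne_of_val_eq_scalar {U : SU2} {c : ℂ} (hU : U.1 = scalar (Fin 2) c) :
    U = 1 ∨ U = negOne := by
  have hc : c = 1 ∨ c = -1 := by
    simpa [hU, Matrix.det_fin_two] using (Matrix.mem_specialUnitaryGroup_iff.mp U.2).2
  rcases hc with rfl | rfl
  · exact Or.inl (Subtype.ext (hU.trans (by simp)))
  · exact Or.inr (Subtype.ext (hU.trans (by rw [map_neg, map_one]; rfl)))

theorem negOne_ne_one : negOne ≠ 1 := by
  intro h
  have := congrFun (congrFun (congrArg Subtype.val h) 0) 0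
  norm_num [negOne] at this

theorem stabilizer_of_representation_variety_point_is_center_general
    (g : ℕ) (A B : Fin g → SU2)
    (h : (List.ofFn (fun i => A i * B i * (A i)⁻¹ * (B i)⁻¹)).prod = negOne)
    (h' : SU2)
    (hcomm : ∀ i : Fin g, h' * A i = A i * h' ∧ h' * B i = B i * h') :
    h' = 1 ∨ h' = negOne := by
  by_contra! hne
  have hM : ∀ c : ℂ, h'.1 ≠ scalar (Fin 2) c := fun c hc =>
    (eq_one_or_eq_negOne_of_val_eq_scalar hc).elim hne.1 hne.2
  have hAB : ∀ i, A i * B i = B i * A i := fun i =>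
    Subtype.ext (commute_of_commute_of_ne_scalar hM
      (congrArg Subtype.val (hcomm i).1) (congrArg Subtype.val (hcomm i).2)).eq
  refine negOne_ne_one (h.symm.trans (List.prod_eq_one ?_))
  simp [hAB]

/-- Every point of the genus-`g` representation variety
`R_g = {(A₁,…,A_g,B₁,…,B_g) ∈ SU(2)^{2g} : ∏ᵢ AᵢBᵢAᵢ⁻¹Bᵢ⁻¹ = -1}` is an irreducible
representation: any `h ∈ SU(2)` commuting with all of the `Aᵢ` and `Bᵢ` is `±1`.
(The stabilizer of the conjugation action at every point of `R_g` is the center.) -/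
theorem stabilizer_of_representation_variety_point_is_center
    (g : ℕ) (hg : 1 ≤ g) (A B : Fin g → SU2)
    (h : (List.ofFn (fun i => A i * B i * (A i)⁻¹ * (B i)⁻¹)).prod = negOne)
    (h' : SU2)
    (hcomm : ∀ i : Fin g, h' * A i = A i * h' ∧ h' * B i = B i * h') :
    h' = 1 ∨ h' = negOne :=
  stabilizer_of_representation_variety_point_is_center_general g A B h h' hcomm
end

section
/- Fix integers n ≥ 1, g ≥ 1, and d with gcd(n, d) = 1, and let ζ = exp(2πi/n) ∈ ℂ. Suppose A₁,...,A_g, B₁,...,B_g ∈ SU(n) satisfy ∏_{i=1}^{g} A_i*B_i*A_i⁻¹*B_i⁻¹ = ζ^d·1. Then: (i) there is no ℂ-subspace W of ℂⁿ with 0 ≠ W ≠ ℂⁿ that is invariant under multiplication by every A_i and every B_i (the tuple is an irreducible representation); and (ii) every unitary n×n matrix commuting with every A_i and every B_i is a scalar matrix. (This irreducibility is the algebraic fact underlying the smoothness of the moduli space M_g^{n,d} when n and d are coprime.) -/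
open Matrix Complex

/-- `SUn n` is the special unitary group of `n × n` complex matrices of determinant 1. -/
abbrev SUn (n : ℕ) := Matrix.specialUnitaryGroup (Fin n) ℂ

/-- The primitive `n`-th root of unity `ζ = exp(2πi/n)`. -/
noncomputable def zeta (n : ℕ) : ℂ := Complex.exp (2 * (Real.pi : ℂ) * Complex.I / n)

/-!
If `W` is invariant under all `Aᵢ, Bᵢ`, the elements of `SU(n)` preserving `W` form a group
on which the determinant of the restriction to `W` is a homomorphism to the commutative group
`ℂˣ`; hence the product of commutators acts on `W` with determinant `1`. It acts by the scalar `ζ^d`, whose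
determinant on `W` is `ζ^(d · dim W)`, and `ζ^d` is a primitive `n`-th root of unity because
`gcd(n, d) = 1`. So `n ∣ dim W`, i.e. `W = 0` or `W = ℂⁿ`. Part (ii) is Schur's lemma: an
eigenspace of `M` is invariant under all `Aᵢ, Bᵢ`, hence is all of `ℂⁿ`.
-/

open Module

namespace Representation

variable {K G V : Type*} [Field K] [Group G] [AddCommGroup V] [Module K V]
  [FiniteDimensional K V] (ρ : Representation K G V) (W : Submodule K V)

theorem mem_invtSubmodule_apply_inv {g : G} (hg : W ∈ End.invtSubmodule (ρ g)) :
    W ∈ End.invtSubmodule (ρ g⁻¹) := by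
  have hinj : Function.Injective (ρ g) := (ρ.apply_bijective g).injective
  have hmap : W.map (ρ g) = W :=
    Submodule.eq_of_le_of_finrank_eq ((End.mem_invtSubmodule_iff_map_le _).1 hg)
      (Submodule.equivMapOfInjective _ hinj W).finrank_eq.symm
  intro x hx
  rw [← hmap] at hx
  obtain ⟨y, hy, rfl⟩ := hx
  simpa only [Submodule.mem_comap, inv_self_apply, SetLike.mem_coe] using hy

def stabilizer : Subgroup G where
  carrier := {g | W ∈ End.invtSubmodule (ρ g)}
  mul_mem' {g h} hg hh x hx := by
    simpa using hg (hh hx)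
  one_mem' := by simp
  inv_mem' := ρ.mem_invtSubmodule_apply_inv W

noncomputable def detRestrict : ρ.stabilizer W →* K where
  toFun g := LinearMap.det ((ρ g).restrict g.2)
  map_one' := by
    convert LinearMap.det_id
    ext; simp
  map_mul' g h := by
    rw [← LinearMap.det_comp]
    congr 1
    ext x
    simp only [Subgroup.coe_mul, map_mul, LinearMap.coe_restrict_apply, End.mul_apply]
    rfl

theorem detRestrict_eq_pow_finrank {g : ρ.stabilizer W} {c : K} (hc : ρ g = c • 1) :
    ρ.detRestrict W g = c ^ finrank K W := by
  have : (ρ g).restrict g.2 = c • 1 := by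
    ext; simp [hc]
  change LinearMap.det ((ρ g).restrict g.2) = _
  rw [this, LinearMap.det_smul, map_one, mul_one]

theorem detRestrict_eq_one_of_mem_commutator {g : ρ.stabilizer W}
    (hg : g ∈ commutator (ρ.stabilizer W)) : ρ.detRestrict W g = 1 := by
  have := Abelianization.commutator_subset_ker (ρ.detRestrict W).toHomUnits hg
  simpa [MonoidHom.mem_ker, Units.ext_iff] using this

theorem pow_finrank_eq_one_of_mem_commutator {g : G}
    (hg : g ∈ ⁅ρ.stabilizer W, ρ.stabilizer W⁆) {c : K} (hc : ρ g = c • 1) :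
    c ^ finrank K W = 1 := by
  have hS : ⁅ρ.stabilizer W, ρ.stabilizer W⁆ =
      (commutator (ρ.stabilizer W)).map (ρ.stabilizer W).subtype := by
    rw [commutator_def, Subgroup.map_commutator, ← MonoidHom.range_eq_map, Subgroup.range_subtype]
  rw [hS] at hg
  obtain ⟨h, hh, rfl⟩ := hg
  rw [← ρ.detRestrict_eq_pow_finrank W hc, ρ.detRestrict_eq_one_of_mem_commutator W hh]

theorem eq_bot_or_eq_top_of_mem_commutator {g : G}
    (hg : g ∈ ⁅ρ.stabilizer W, ρ.stabilizer W⁆) {c : K} (hc : ρ g = c • 1)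
    (hprim : IsPrimitiveRoot c (finrank K V)) : W = ⊥ ∨ W = ⊤ := by
  by_contra! hW
  have hpos : 0 < finrank K W := Nat.pos_of_ne_zero (Submodule.finrank_eq_zero.not.mpr hW.1)
  have hlt : finrank K W < finrank K V := Submodule.finrank_lt hW.2
  have hdvd := hprim.dvd_of_pow_eq_one _ (ρ.pow_finrank_eq_one_of_mem_commutator W hg hc)
  exact (Nat.le_of_dvd hpos hdvd).not_gt hlt

end Representation

namespace Module.End

variable {K V : Type*} [Field K] [IsAlgClosed K] [AddCommGroup V] [Module K V]
  [FiniteDimensional K V] [Nontrivial V]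

theorem exists_eq_smul_one_of_commute {S : Set (End K V)}
    (hS : ∀ W : Submodule K V, (∀ t ∈ S, W ∈ invtSubmodule t) → W = ⊥ ∨ W = ⊤)
    {f : End K V} (hf : ∀ t ∈ S, Commute f t) : ∃ c : K, f = c • 1 := by
  obtain ⟨μ, hμ⟩ := f.exists_eigenvalue
  have hinvt : ∀ t ∈ S, f.eigenspace μ ∈ invtSubmodule t := fun t ht =>
    mapsTo_genEigenspace_of_comm (hf t ht) μ 1
  have htop : f.eigenspace μ = ⊤ := (hS _ hinvt).resolve_left hμ
  refine ⟨μ, LinearMap.ext fun x => ?_⟩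
  exact mem_eigenspace_iff.mp (htop ▸ Submodule.mem_top)

end Module.End

noncomputable def SUn.standardRep (n : ℕ) : Representation ℂ (SUn n) (Fin n → ℂ) :=
  Matrix.toLinAlgEquiv'.toAlgHom.toMonoidHom.comp (Matrix.specialUnitaryGroup (Fin n) ℂ).subtype

theorem SUn.standardRep_eq_smul_one_iff {n : ℕ} {A : SUn n} {c : ℂ} :
    SUn.standardRep n A = c • 1 ↔ (A : Matrix (Fin n) (Fin n) ℂ) = c • 1 := by
  rw [← Matrix.toLinAlgEquiv'.injective.eq_iff, map_smul, map_one]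
  rfl

theorem coprime_determinant_tuple_irreducible_general
    (n g : ℕ) (hn : 1 ≤ n) (d : ℤ) (hcop : Int.gcd (n : ℤ) d = 1)
    (A B : Fin g → SUn n)
    (h : (((List.ofFn (fun i => A i * B i * (A i)⁻¹ * (B i)⁻¹)).prod : SUn n) :
        Matrix (Fin n) (Fin n) ℂ) = zeta n ^ d • (1 : Matrix (Fin n) (Fin n) ℂ)) :
    (¬ ∃ W : Submodule ℂ (Fin n → ℂ), W ≠ ⊥ ∧ W ≠ ⊤ ∧
      ∀ i : Fin g, ∀ x ∈ W,
        (A i : Matrix (Fin n) (Fin n) ℂ).mulVec x ∈ W ∧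
        (B i : Matrix (Fin n) (Fin n) ℂ).mulVec x ∈ W) ∧
    (∀ M : Matrix (Fin n) (Fin n) ℂ, M ∈ Matrix.unitaryGroup (Fin n) ℂ →
      (∀ i : Fin g, M * (A i : Matrix (Fin n) (Fin n) ℂ) = (A i : Matrix (Fin n) (Fin n) ℂ) * M ∧
        M * (B i : Matrix (Fin n) (Fin n) ℂ) = (B i : Matrix (Fin n) (Fin n) ℂ) * M) →
      ∃ c : ℂ, M = c • (1 : Matrix (Fin n) (Fin n) ℂ)) := by
  set ρ := SUn.standardRep n
  have hζ : IsPrimitiveRoot (zeta n ^ d) (finrank ℂ (Fin n → ℂ)) := by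
    rw [Module.finrank_fin_fun]
    exact (Complex.isPrimitiveRoot_exp n (by omega)).zpow_of_gcd_eq_one d (by rwa [Int.gcd_comm])
  have hirr : ∀ W : Submodule ℂ (Fin n → ℂ), (∀ i : Fin g, ∀ x ∈ W,
        (A i : Matrix (Fin n) (Fin n) ℂ).mulVec x ∈ W ∧
        (B i : Matrix (Fin n) (Fin n) ℂ).mulVec x ∈ W) →
      W = ⊥ ∨ W = ⊤ := by
    intro W hW
    refine ρ.eq_bot_or_eq_top_of_mem_commutator W (Subgroup.list_prod_mem _ ?_)
      (SUn.standardRep_eq_smul_one_iff.mpr h) hζ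
    simp only [List.mem_ofFn, forall_exists_index, forall_apply_eq_imp_iff]
    exact fun i => Subgroup.commutator_mem_commutator (fun x hx => (hW i x hx).1)
      (fun x hx => (hW i x hx).2)
  refine ⟨fun ⟨W, hbot, htop, hW⟩ => (hirr W hW).elim hbot htop, fun M _ hM => ?_⟩
  have : Nonempty (Fin n) := ⟨⟨0, hn⟩⟩
  obtain ⟨c, hc⟩ := End.exists_eq_smul_one_of_commute
    (S := Set.range (ρ ∘ A) ∪ Set.range (ρ ∘ B)) (f := Matrix.toLinAlgEquiv' M)
    (fun W hW => hirr W fun i x hx => ⟨hW _ (.inl ⟨i, rfl⟩) hx, hW _ (.inr ⟨i, rfl⟩) hx⟩)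
    (by
      rintro _ (⟨i, rfl⟩ | ⟨i, rfl⟩)
      · exact Commute.map (hM i).1 Matrix.toLinAlgEquiv'
      · exact Commute.map (hM i).2 Matrix.toLinAlgEquiv')
  exact ⟨c, Matrix.toLinAlgEquiv'.injective (by rw [hc, map_smul, map_one])⟩

/-- If `gcd(n,d) = 1` and `(A₁,…,A_g,B₁,…,B_g) ∈ SU(n)^{2g}` satisfies
`∏ᵢ AᵢBᵢAᵢ⁻¹Bᵢ⁻¹ = ζ^d·1` with `ζ = exp(2πi/n)`, then the tuple is irreducible:
(i) there is no nonzero proper subspace of `ℂⁿ` invariant under all `Aᵢ` and `Bᵢ`; and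
(ii) every unitary matrix commuting with all `Aᵢ` and `Bᵢ` is a scalar matrix. -/
theorem coprime_determinant_tuple_irreducible
    (n g : ℕ) (hn : 1 ≤ n) (hg : 1 ≤ g) (d : ℤ) (hcop : Int.gcd (n : ℤ) d = 1)
    (A B : Fin g → SUn n)
    (h : (((List.ofFn (fun i => A i * B i * (A i)⁻¹ * (B i)⁻¹)).prod : SUn n) :
        Matrix (Fin n) (Fin n) ℂ) = zeta n ^ d • (1 : Matrix (Fin n) (Fin n) ℂ)) :
    (¬ ∃ W : Submodule ℂ (Fin n → ℂ), W ≠ ⊥ ∧ W ≠ ⊤ ∧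
      ∀ i : Fin g, ∀ x ∈ W,
        (A i : Matrix (Fin n) (Fin n) ℂ).mulVec x ∈ W ∧
        (B i : Matrix (Fin n) (Fin n) ℂ).mulVec x ∈ W) ∧
    (∀ M : Matrix (Fin n) (Fin n) ℂ, M ∈ Matrix.unitaryGroup (Fin n) ℂ →
      (∀ i : Fin g, M * (A i : Matrix (Fin n) (Fin n) ℂ) = (A i : Matrix (Fin n) (Fin n) ℂ) * M ∧
        M * (B i : Matrix (Fin n) (Fin n) ℂ) = (B i : Matrix (Fin n) (Fin n) ℂ) * M) →
      ∃ c : ℂ, M = c • (1 : Matrix (Fin n) (Fin n) ℂ)) :=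
  coprime_determinant_tuple_irreducible_general n g hn d hcop A B h
end
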